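/- Let d ≥ 2 and let Ω ⊂ ℝ^d be a bounded open convex set. If an open ball of radius r is contained in Ω and Ω is contained in a slab of width w (i.e., between two parallel hyperplanes at distance w), then 2r ≤ w; consequently the width satisfies w(Ω) ≥ 2 r_in(Ω). Conversely, there is a constant C_d depending only on d such that w(Ω) ≤ C_d r_in(Ω). -/

import Mathlib

open Metric MeasureTheory

set_option maxHeartbeats 1600000

/-- The inradius `r_in(Ω) = sup_{x ∈ Ω} dist(x, Ω^c)`. -/
noncomputable def inradius {d : ℕ} (Ω : Set (EuclideanSpace ℝ (Fin d))) : ℝ :=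
  ⨆ x ∈ Ω, Metric.infDist x Ωᶜ

/-- The width `w(Ω) = inf_{ω ∈ S^{d−1}} (sup_{x∈Ω} ω·x − inf_{x∈Ω} ω·x)`. -/
noncomputable def width {d : ℕ} (Ω : Set (EuclideanSpace ℝ (Fin d))) : ℝ :=
  ⨅ ω : Metric.sphere (0 : EuclideanSpace ℝ (Fin d)) 1,
    ((⨆ x : Ω, (inner ℝ (ω : EuclideanSpace ℝ (Fin d)) (x : EuclideanSpace ℝ (Fin d)) : ℝ)) -
      ⨅ x : Ω, (inner ℝ (ω : EuclideanSpace ℝ (Fin d)) (x : EuclideanSpace ℝ (Fin d)) : ℝ))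

section Aux

variable {d : ℕ} {Ω : Set (EuclideanSpace ℝ (Fin d))}

/-- Directional supremum of `Ω` in direction `ω`. -/
noncomputable def dirSup (Ω : Set (EuclideanSpace ℝ (Fin d)))
    (ω : EuclideanSpace ℝ (Fin d)) : ℝ :=
  ⨆ x : Ω, (inner ℝ ω (x : EuclideanSpace ℝ (Fin d)) : ℝ)

/-- Directional infimum of `Ω` in direction `ω`. -/
noncomputable def dirInf (Ω : Set (EuclideanSpace ℝ (Fin d)))
    (ω : EuclideanSpace ℝ (Fin d)) : ℝ :=
  ⨅ x : Ω, (inner ℝ ω (x : EuclideanSpace ℝ (Fin d)) : ℝ)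

lemma width_eq : width Ω = ⨅ ω : Metric.sphere (0 : EuclideanSpace ℝ (Fin d)) 1,
    (dirSup Ω (ω : EuclideanSpace ℝ (Fin d)) - dirInf Ω (ω : EuclideanSpace ℝ (Fin d))) := rfl

lemma dir_bddAbove (hb : Bornology.IsBounded Ω) (ω : EuclideanSpace ℝ (Fin d)) :
    BddAbove (Set.range fun x : Ω => (inner ℝ ω (x : EuclideanSpace ℝ (Fin d)) : ℝ)) := by
  obtain ⟨R, hR⟩ := isBounded_iff_forall_norm_le.mp hb
  refine ⟨‖ω‖ * R, ?_⟩
  rintro y ⟨x, rfl⟩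
  calc (inner ℝ ω (x : EuclideanSpace ℝ (Fin d)) : ℝ)
      ≤ ‖ω‖ * ‖(x : EuclideanSpace ℝ (Fin d))‖ := real_inner_le_norm _ _
    _ ≤ ‖ω‖ * R := by
        have h1 := hR _ x.2
        have h0 : (0:ℝ) ≤ ‖ω‖ := norm_nonneg _
        nlinarith

lemma dir_bddBelow (hb : Bornology.IsBounded Ω) (ω : EuclideanSpace ℝ (Fin d)) :
    BddBelow (Set.range fun x : Ω => (inner ℝ ω (x : EuclideanSpace ℝ (Fin d)) : ℝ)) := by
  obtain ⟨R, hR⟩ := isBounded_iff_forall_norm_le.mp hb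
  refine ⟨-(‖ω‖ * R), ?_⟩
  rintro y ⟨x, rfl⟩
  have h1 : (inner ℝ ω (-(x : EuclideanSpace ℝ (Fin d))) : ℝ)
      ≤ ‖ω‖ * ‖(x : EuclideanSpace ℝ (Fin d))‖ := by
    simpa using real_inner_le_norm ω (-(x : EuclideanSpace ℝ (Fin d)))
  rw [inner_neg_right] at h1
  have h2 := hR _ x.2
  have h0 : (0:ℝ) ≤ ‖ω‖ := norm_nonneg _
  simp only
  nlinarith

lemma le_dirSup (hb : Bornology.IsBounded Ω) {x : EuclideanSpace ℝ (Fin d)} (hx : x ∈ Ω)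
    (ω : EuclideanSpace ℝ (Fin d)) : (inner ℝ ω x : ℝ) ≤ dirSup Ω ω :=
  le_ciSup (dir_bddAbove hb ω) (⟨x, hx⟩ : Ω)

lemma dirInf_le (hb : Bornology.IsBounded Ω) {x : EuclideanSpace ℝ (Fin d)} (hx : x ∈ Ω)
    (ω : EuclideanSpace ℝ (Fin d)) : dirInf Ω ω ≤ (inner ℝ ω x : ℝ) :=
  ciInf_le (dir_bddBelow hb ω) (⟨x, hx⟩ : Ω)

lemma le_dirSup_closure (hb : Bornology.IsBounded Ω) {x : EuclideanSpace ℝ (Fin d)}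
    (hx : x ∈ closure Ω) (ω : EuclideanSpace ℝ (Fin d)) : (inner ℝ ω x : ℝ) ≤ dirSup Ω ω := by
  have hsub : closure Ω ⊆ {y : EuclideanSpace ℝ (Fin d) | (inner ℝ ω y : ℝ) ≤ dirSup Ω ω} := by
    apply closure_minimal
    · intro y hy
      exact le_dirSup hb hy ω
    · exact isClosed_le (innerSL ℝ ω).continuous continuous_const
  exact hsub hx

lemma mem_of_mem_interior_closure (ho : IsOpen Ω) (hc : Convex ℝ Ω)
    {x₀ : EuclideanSpace ℝ (Fin d)} (hx₀ : x₀ ∈ Ω)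
    {y : EuclideanSpace ℝ (Fin d)} (hy : y ∈ interior (closure Ω)) : y ∈ Ω := by
  obtain ⟨ε, hε, hball⟩ := Metric.isOpen_iff.mp isOpen_interior y hy
  obtain ⟨δ, hδ, hlt⟩ : ∃ δ : ℝ, 0 < δ ∧ δ * ‖y - x₀‖ < ε := by
    refine ⟨ε / (2 * (‖y - x₀‖ + 1)), by positivity, ?_⟩
    rw [div_mul_eq_mul_div, div_lt_iff₀ (by positivity)]
    nlinarith [norm_nonneg (y - x₀)]
  have hy' : y + δ • (y - x₀) ∈ closure Ω := by
    refine interior_subset (hball ?_)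
    rw [mem_ball_iff_norm, add_sub_cancel_left, norm_smul, Real.norm_eq_abs, abs_of_pos hδ]
    exact hlt
  have h1δ : (0:ℝ) < 1 + δ := by linarith
  have hcombo := hc.combo_interior_closure_mem_interior
    (x := x₀) (y := y + δ • (y - x₀)) (a := δ / (1 + δ)) (b := 1 / (1 + δ))
    (by rwa [ho.interior_eq]) hy' (by positivity) (by positivity)
    (by field_simp; ring)
  rw [ho.interior_eq] at hcombo
  convert hcombo using 1
  match_scalars <;> field_simp <;> ring

lemma exists_notMem (hd : 1 ≤ d) (hb : Bornology.IsBounded Ω) :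
    ∃ z : EuclideanSpace ℝ (Fin d), z ∉ Ω := by
  obtain ⟨R, hR⟩ := isBounded_iff_forall_norm_le.mp hb
  refine ⟨EuclideanSpace.single (⟨0, by omega⟩ : Fin d) (|R| + 1), fun hz => ?_⟩
  have h1 := hR _ hz
  rw [EuclideanSpace.norm_single] at h1
  have h2 : |R| + 1 ≤ R := by
    rwa [Real.norm_eq_abs, abs_of_pos (by positivity)] at h1
  have := le_abs_self R
  linarith

lemma inradius_bddAbove (hd : 1 ≤ d) (hb : Bornology.IsBounded Ω) :
    BddAbove (Set.range fun x : EuclideanSpace ℝ (Fin d) =>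
      ⨆ _ : x ∈ Ω, Metric.infDist x Ωᶜ) := by
  obtain ⟨z, hz⟩ := exists_notMem hd hb
  obtain ⟨R, hR⟩ := isBounded_iff_forall_norm_le.mp hb
  refine ⟨|R| + ‖z‖, ?_⟩
  rintro y ⟨x, rfl⟩
  by_cases hx : x ∈ Ω
  · show (⨆ _ : x ∈ Ω, Metric.infDist x Ωᶜ) ≤ |R| + ‖z‖
    rw [ciSup_pos (p := x ∈ Ω) (f := fun _ => Metric.infDist x Ωᶜ) hx]
    calc Metric.infDist x Ωᶜ ≤ dist x z := Metric.infDist_le_dist_of_mem hz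
      _ ≤ ‖x‖ + ‖z‖ := by rw [dist_eq_norm]; exact norm_sub_le _ _
      _ ≤ |R| + ‖z‖ := by
          have h1 := hR x hx
          have h2 := le_abs_self R
          linarith
  · show (⨆ _ : x ∈ Ω, Metric.infDist x Ωᶜ) ≤ |R| + ‖z‖
    haveI : IsEmpty (x ∈ Ω) := ⟨hx⟩
    rw [Real.iSup_of_isEmpty]
    positivity

lemma le_inradius (hd : 1 ≤ d) (hb : Bornology.IsBounded Ω)
    {x : EuclideanSpace ℝ (Fin d)} (hx : x ∈ Ω) : Metric.infDist x Ωᶜ ≤ inradius Ω := by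
  have h1 : Metric.infDist x Ωᶜ = ⨆ _ : x ∈ Ω, Metric.infDist x Ωᶜ := (ciSup_pos (p := x ∈ Ω) (f := fun _ => Metric.infDist x Ωᶜ) hx).symm
  rw [inradius, h1]
  exact le_ciSup (inradius_bddAbove hd hb) x

lemma inradius_nonneg (hd : 1 ≤ d) (hb : Bornology.IsBounded Ω) (hne : Ω.Nonempty) :
    0 ≤ inradius Ω := by
  obtain ⟨x₀, hx₀⟩ := hne
  exact le_trans Metric.infDist_nonneg (le_inradius hd hb hx₀)

lemma ball_infDist_subset {x : EuclideanSpace ℝ (Fin d)} :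
    Metric.ball x (Metric.infDist x Ωᶜ) ⊆ Ω := by
  intro y hy
  by_contra hyc
  have h1 := Metric.infDist_le_dist_of_mem (x := x) (show y ∈ Ωᶜ from hyc)
  rw [mem_ball, dist_comm] at hy
  linarith

lemma exists_unit_sep (hb : Bornology.IsBounded Ω) (hc : Convex ℝ Ω) (hne : Ω.Nonempty)
    {z : EuclideanSpace ℝ (Fin d)} (hz : z ∉ closure Ω) :
    ∃ ω : EuclideanSpace ℝ (Fin d), ‖ω‖ = 1 ∧ dirSup Ω ω < (inner ℝ ω z : ℝ) := by
  obtain ⟨f, u, hfu, huf⟩ := geometric_hahn_banach_closed_point hc.closure isClosed_closure hz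
  set v : EuclideanSpace ℝ (Fin d) := (InnerProductSpace.toDual ℝ _).symm f with hv
  have hfv : ∀ x, f x = (inner ℝ v x : ℝ) := fun x => (InnerProductSpace.toDual_symm_apply).symm
  obtain ⟨x₀, hx₀⟩ := hne
  have hvne : v ≠ 0 := by
    intro h0
    have h1 := hfu x₀ (subset_closure hx₀)
    have h2 : f x₀ = 0 := by rw [hfv, h0, inner_zero_left]
    have h3 : f z = 0 := by rw [hfv, h0, inner_zero_left]
    linarith
  have hvpos : 0 < ‖v‖ := norm_pos_iff.mpr hvne
  refine ⟨‖v‖⁻¹ • v, ?_, ?_⟩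
  · rw [norm_smul, Real.norm_eq_abs, abs_of_pos (by positivity), inv_mul_cancel₀ hvpos.ne']
  · have hle : dirSup Ω (‖v‖⁻¹ • v) ≤ ‖v‖⁻¹ * u := by
      haveI : Nonempty Ω := ⟨⟨x₀, hx₀⟩⟩
      apply ciSup_le
      intro x
      rw [real_inner_smul_left]
      have h1 : (inner ℝ v (x : EuclideanSpace ℝ (Fin d)) : ℝ) ≤ u := by
        rw [← hfv]
        exact (hfu _ (subset_closure x.2)).le
      have h2 : (0:ℝ) < ‖v‖⁻¹ := by positivity
      nlinarith
    have hlt : ‖v‖⁻¹ * u < (inner ℝ (‖v‖⁻¹ • v) z : ℝ) := by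
      rw [real_inner_smul_left, ← hfv]
      have h2 : (0:ℝ) < ‖v‖⁻¹ := by positivity
      nlinarith
    linarith

/-- The affine coordinate map used in the separation argument. -/
noncomputable def gmap {d m : ℕ} (w : Fin m → EuclideanSpace ℝ (Fin d)) (S : Fin m → ℝ)
    (x : EuclideanSpace ℝ (Fin d)) : EuclideanSpace ℝ (Fin m) :=
  WithLp.toLp 2 (fun i => (inner ℝ (w i) x : ℝ) - S i)

lemma gmap_continuous {m : ℕ} (w : Fin m → EuclideanSpace ℝ (Fin d)) (S : Fin m → ℝ) :
    Continuous (gmap w S) := by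
  refine (PiLp.continuous_toLp 2 _).comp (continuous_pi ?_)
  intro i
  exact ((innerSL ℝ (w i)).continuous).sub continuous_const

lemma gmap_image_convex {m : ℕ} (w : Fin m → EuclideanSpace ℝ (Fin d)) (S : Fin m → ℝ)
    {K : Set (EuclideanSpace ℝ (Fin d))} (hK : Convex ℝ K) :
    Convex ℝ (gmap w S '' K) := by
  rintro _ ⟨x, hx, rfl⟩ _ ⟨y, hy, rfl⟩ a b ha hb hab
  refine ⟨a • x + b • y, hK hx hy ha hb hab, ?_⟩
  ext i
  simp only [PiLp.add_apply, PiLp.smul_apply, gmap, smul_eq_mul,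
    inner_add_right, real_inner_smul_right]
  linear_combination (S i) * hab

lemma Qset_closed {m : ℕ} (r : ℝ) :
    IsClosed {z : EuclideanSpace ℝ (Fin m) | ∀ i, z i ≤ -r} := by
  have h : {z : EuclideanSpace ℝ (Fin m) | ∀ i, z i ≤ -r}
      = ⋂ i, {z : EuclideanSpace ℝ (Fin m) | z i ≤ -r} := by ext; simp
  rw [h]
  exact isClosed_iInter fun i =>
    isClosed_le (EuclideanSpace.proj i).continuous continuous_const

lemma Qset_convex {m : ℕ} (r : ℝ) :
    Convex ℝ {z : EuclideanSpace ℝ (Fin m) | ∀ i, z i ≤ -r} := by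
  intro z1 h1 z2 h2 a b ha hb hab
  intro i
  have e1 : (a • z1 + b • z2) i = a * z1 i + b * z2 i := by
    simp [PiLp.add_apply, PiLp.smul_apply]
  rw [e1]
  have h1i : z1 i ≤ -r := h1 i
  have h2i : z2 i ≤ -r := h2 i
  have hr' : a * (-r) + b * (-r) = -r := by linear_combination (-r) * hab
  have ha1 := mul_le_mul_of_nonneg_left h1i ha
  have ha2 := mul_le_mul_of_nonneg_left h2i hb
  linarith

/-- The key Steinhagen-type estimate: if `r` exceeds the inradius, some direction has
extent at most `(d+1) r`. -/
lemma steinhagen_aux (hd : 2 ≤ d) (ho : IsOpen Ω) (hb : Bornology.IsBounded Ω)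
    (hc : Convex ℝ Ω) (hne : Ω.Nonempty) {r : ℝ} (hr : inradius Ω < r) :
    ∃ ω : EuclideanSpace ℝ (Fin d), ‖ω‖ = 1 ∧
      dirSup Ω ω - dirInf Ω ω ≤ ((d : ℝ) + 1) * r := by
  have hd1 : 1 ≤ d := by omega
  have hr0 : 0 < r := lt_of_le_of_lt (inradius_nonneg hd1 hb hne) hr
  obtain ⟨x₀, hx₀⟩ := hne
  haveI : Nonempty Ω := ⟨⟨x₀, hx₀⟩⟩
  set K := closure Ω with hK
  have hKcomp : IsCompact K := hb.isCompact_closure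
  have hKconv : Convex ℝ K := hc.closure
  have hKne : K.Nonempty := ⟨x₀, subset_closure hx₀⟩
  -- the family of "deep" slabs
  set F : Metric.sphere (0 : EuclideanSpace ℝ (Fin d)) 1 → Set (EuclideanSpace ℝ (Fin d)) := fun ω =>
    K ∩ {x | (inner ℝ (ω : EuclideanSpace ℝ (Fin d)) x : ℝ) ≤
      dirSup Ω (ω : EuclideanSpace ℝ (Fin d)) - r} with hF
  have hFconv : ∀ ω, Convex ℝ (F ω) := by
    intro ω
    apply hKconv.inter
    intro z1 h1 z2 h2 a b ha hb' hab
    simp only [Set.mem_setOf_eq] at h1 h2 ⊢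
    rw [inner_add_right, real_inner_smul_right, real_inner_smul_right]
    have hr' : a * (dirSup Ω (ω : EuclideanSpace ℝ (Fin d)) - r)
        + b * (dirSup Ω (ω : EuclideanSpace ℝ (Fin d)) - r)
        = dirSup Ω (ω : EuclideanSpace ℝ (Fin d)) - r := by
      linear_combination (dirSup Ω (ω : EuclideanSpace ℝ (Fin d)) - r) * hab
    have ha1 := mul_le_mul_of_nonneg_left h1 ha
    have ha2 := mul_le_mul_of_nonneg_left h2 hb'
    linarith
  have hFclosed : ∀ ω, IsClosed (F ω) := by
    intro ω
    exact isClosed_closure.inter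
      (isClosed_le (innerSL ℝ (ω : EuclideanSpace ℝ (Fin d))).continuous continuous_const)
  have hFcomp : ∀ ω, IsCompact (F ω) :=
    fun ω => hKcomp.of_isClosed_subset (hFclosed ω) Set.inter_subset_left
  -- the whole family has empty intersection
  have hFempty : ⋂ ω, F ω = ∅ := by
    rw [Set.eq_empty_iff_forall_notMem]
    intro x hx
    rw [Set.mem_iInter] at hx
    -- ball x r ⊆ closure Ω
    have hball : Metric.ball x r ⊆ K := by
      intro y hy
      by_contra hyK
      obtain ⟨ω, hω1, hω2⟩ := exists_unit_sep hb hc ⟨x₀, hx₀⟩ hyK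
      have hmem : ω ∈ Metric.sphere (0 : EuclideanSpace ℝ (Fin d)) 1 :=
        mem_sphere_zero_iff_norm.mpr hω1
      have hxF := hx ⟨ω, hmem⟩
      obtain ⟨-, hxle⟩ := hxF
      simp only [Set.mem_setOf_eq] at hxle
      have hdec : (inner ℝ ω y : ℝ) = (inner ℝ ω x : ℝ) + (inner ℝ ω (y - x) : ℝ) := by
        rw [← inner_add_right]
        congr 1
        abel
      have hbd : (inner ℝ ω (y - x) : ℝ) ≤ ‖y - x‖ := by
        have := real_inner_le_norm ω (y - x)
        rwa [hω1, one_mul] at this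
      have hyx : ‖y - x‖ < r := by rwa [mem_ball_iff_norm] at hy
      have : (inner ℝ ω y : ℝ) < dirSup Ω ω := by
        rw [hdec]
        linarith
      linarith
    have hball2 : Metric.ball x r ⊆ Ω := by
      intro y hy
      exact mem_of_mem_interior_closure ho hc hx₀
        (interior_maximal hball isOpen_ball hy)
    have hxΩ : x ∈ Ω := hball2 (Metric.mem_ball_self hr0)
    have hrle : r ≤ Metric.infDist x Ωᶜ := by
      obtain ⟨z, hzc⟩ := exists_notMem hd1 hb
      have hcne : (Ωᶜ : Set (EuclideanSpace ℝ (Fin d))).Nonempty := ⟨z, hzc⟩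
      haveI : Nonempty (Ωᶜ : Set (EuclideanSpace ℝ (Fin d))) := hcne.to_subtype
      rw [Metric.infDist_eq_iInf]
      apply le_ciInf
      intro y
      by_contra hlt
      push_neg at hlt
      exact y.2 (hball2 (by rwa [mem_ball, dist_comm]))
    have := le_inradius hd1 hb hxΩ
    linarith
  -- Helly: some at most (d+1)-element subfamily has empty intersection
  have hHelly := Convex.helly_theorem_compact' (𝕜 := ℝ) (F := F) hFconv hFcomp
  have hnall : ¬ (∀ I : Finset (Metric.sphere (0 : EuclideanSpace ℝ (Fin d)) 1), I.card ≤ Module.finrank ℝ (EuclideanSpace ℝ (Fin d)) + 1 →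
      (⋂ i ∈ I, F i).Nonempty) := by
    intro h
    have := hHelly h
    rw [hFempty] at this
    exact Set.not_nonempty_empty this
  push_neg at hnall
  obtain ⟨I, hIcard, hInon⟩ := hnall
  rw [finrank_euclideanSpace_fin] at hIcard
  set m := I.card with hm
  have hmd : m ≤ d + 1 := hIcard
  have hm1 : 1 ≤ m := by
    by_contra hm0
    push_neg at hm0
    interval_cases m
    · have hIe : I = ∅ := Finset.card_eq_zero.mp hm.symm
      obtain ⟨y0, hy0⟩ := hKne
      have hy0' : y0 ∈ ⋂ i ∈ I, F i := by
        rw [Set.mem_iInter₂]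
        intro ω hω
        exact absurd hω (by rw [hIe]; exact Finset.notMem_empty ω)
      rw [hInon] at hy0'
      exact hy0'
  haveI : Nonempty (Fin m) := ⟨⟨0, hm1⟩⟩
  have ecard : Fintype.card (↥I) = m := Fintype.card_coe I
  set e := Fintype.equivFinOfCardEq ecard with he
  set w : Fin m → EuclideanSpace ℝ (Fin d) := fun i =>
    ((e.symm i : Metric.sphere (0 : EuclideanSpace ℝ (Fin d)) 1) :
      EuclideanSpace ℝ (Fin d)) with hwdef
  have hwunit : ∀ i, ‖w i‖ = 1 := by
    intro i
    have h := (e.symm i : Metric.sphere (0 : EuclideanSpace ℝ (Fin d)) 1).2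
    rw [mem_sphere_zero_iff_norm] at h
    simpa [hwdef] using h
  set S : Fin m → ℝ := fun i => dirSup Ω (w i) with hSdef
  have hcover : ∀ x ∈ K, ∃ i : Fin m, S i - r < (inner ℝ (w i) x : ℝ) := by
    intro x hxK
    by_contra hcon
    push_neg at hcon
    have hxmem : x ∈ ⋂ i ∈ I, F i := by
      rw [Set.mem_iInter₂]
      intro ω hω
      refine ⟨hxK, ?_⟩
      have hspec := hcon (e ⟨ω, hω⟩)
      have hws : w (e ⟨ω, hω⟩) = (ω : EuclideanSpace ℝ (Fin d)) := by
        rw [hwdef]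
        simp
      rw [hws] at hspec
      simp only [Set.mem_setOf_eq]
      rw [hSdef] at hspec
      simp only at hspec
      rw [hws] at hspec
      exact hspec
    rw [hInon] at hxmem
    exact hxmem
  -- separation in ℝ^m
  set Q : Set (EuclideanSpace ℝ (Fin m)) := {z | ∀ i, z i ≤ -r} with hQ
  have hdisj : Disjoint (gmap w S '' K) Q := by
    rw [Set.disjoint_left]
    rintro _ ⟨x, hxK, rfl⟩ hzQ
    obtain ⟨i, hi⟩ := hcover x hxK
    have h2 : (inner ℝ (w i) x : ℝ) - S i ≤ -r := hzQ i
    linarith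
  obtain ⟨f, u, v, hfu, huv, hfv⟩ := geometric_hahn_banach_compact_closed
    (gmap_image_convex w S hKconv) (hKcomp.image (gmap_continuous w S))
    (Qset_convex r) (Qset_closed r) hdisj
  set μ : EuclideanSpace ℝ (Fin m) := (InnerProductSpace.toDual ℝ _).symm f with hμdef
  have hfall : ∀ z : EuclideanSpace ℝ (Fin m), f z = ∑ i, z i * μ i := by
    intro z
    have h := InnerProductSpace.toDual_symm_apply (𝕜 := ℝ) (y := f) (x := z)
    rw [← h, PiLp.inner_apply]
    simp [mul_comm, hμdef]
  -- the constant vector (-r) is in Q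
  set q0 : EuclideanSpace ℝ (Fin m) := WithLp.toLp 2 (fun _ => -r) with hq0
  have hq0Q : q0 ∈ Q := fun i => le_refl _
  have hq0v : v < f q0 := hfv q0 hq0Q
  -- all μ i ≤ 0
  have hμnonpos : ∀ i, μ i ≤ 0 := by
    intro i
    by_contra hpos
    push_neg at hpos
    set t : ℝ := (f q0 - v) / μ i with ht
    have htpos : 0 < t := by
      apply div_pos (by linarith) hpos
    have hqt : q0 - t • EuclideanSpace.single i (1:ℝ) ∈ Q := by
      intro j
      have e1 : (q0 - t • EuclideanSpace.single i (1:ℝ)) j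
          = -r - t * (EuclideanSpace.single i (1:ℝ)) j := by
        simp [hq0, PiLp.sub_apply, PiLp.smul_apply]
      rw [e1, EuclideanSpace.single_apply]
      by_cases hji : j = i
      · simp [hji]; linarith
      · simp [hji]
    have hfqt := hfv _ hqt
    have e2 : f (q0 - t • EuclideanSpace.single i (1:ℝ)) = f q0 - t * μ i := by
      rw [map_sub, _root_.map_smul, smul_eq_mul]
      congr 1
      rw [hfall (EuclideanSpace.single i (1:ℝ))]
      rw [Finset.sum_eq_single i]
      · rw [EuclideanSpace.single_apply]; simp
      · intro j _ hj
        rw [EuclideanSpace.single_apply]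
        simp [hj]
      · simp
    rw [e2, ht] at hfqt
    rw [div_mul_cancel₀ _ hpos.ne'] at hfqt
    linarith
  set lam : Fin m → ℝ := fun i => -μ i with hlam
  have hlamnn : ∀ i, 0 ≤ lam i := fun i => by simp [hlam]; exact hμnonpos i
  set T : ℝ := ∑ i, lam i with hT
  have hTnn : 0 ≤ T := Finset.sum_nonneg fun i _ => hlamnn i
  have hfq0 : f q0 = r * T := by
    rw [hfall]
    rw [hT, Finset.mul_sum]
    apply Finset.sum_congr rfl
    intro i _
    simp [hq0, hlam]
  have hfgx : ∀ x, f (gmap w S x) = -∑ i, lam i * ((inner ℝ (w i) x : ℝ) - S i) := by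
    intro x
    rw [hfall, ← Finset.sum_neg_distrib]
    apply Finset.sum_congr rfl
    intro i _
    simp only [gmap, hlam]
    ring
  have hTpos : 0 < T := by
    rcases hTnn.lt_or_eq with h | h
    · exact h
    · exfalso
      have hall0 : ∀ i, lam i = 0 := by
        intro i
        have := Finset.sum_eq_zero_iff_of_nonneg (fun i _ => hlamnn i) |>.mp h.symm
        exact this i (Finset.mem_univ i)
      have hf0 : ∀ z, f z = 0 := by
        intro z
        rw [hfall]
        apply Finset.sum_eq_zero
        intro i _
        have : μ i = 0 := by have := hall0 i; simp [hlam] at this; linarith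
        rw [this, mul_zero]
      have h1 := hfu (gmap w S x₀) ⟨x₀, subset_closure hx₀, rfl⟩
      rw [hf0] at h1
      rw [hf0] at hq0v
      linarith
  -- the key inequality
  have hkey : ∀ x ∈ K, -r * T < ∑ i, lam i * ((inner ℝ (w i) x : ℝ) - S i) := by
    intro x hxK
    have h1 := hfu (gmap w S x) ⟨x, hxK, rfl⟩
    rw [hfgx] at h1
    rw [hfq0] at hq0v
    nlinarith
  -- choose the index with maximal weight
  obtain ⟨j, -, hjmax⟩ := Finset.exists_max_image Finset.univ lam Finset.univ_nonempty
  have hTm : T ≤ (m : ℝ) * lam j := by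
    rw [hT]
    calc ∑ i, lam i ≤ ∑ _i : Fin m, lam j :=
          Finset.sum_le_sum fun i _ => hjmax i (Finset.mem_univ i)
      _ = (m : ℝ) * lam j := by
          rw [Finset.sum_const, Finset.card_univ, Fintype.card_fin, nsmul_eq_mul]
  have hlamj : 0 < lam j := by
    by_contra hle
    push_neg at hle
    nlinarith
  -- every x ∈ K satisfies the one-sided bound in direction w j
  have hfinal : ∀ x ∈ K, S j - ((d : ℝ) + 1) * r ≤ (inner ℝ (w j) x : ℝ) := by
    intro x hxK
    have hsum := hkey x hxK
    have hsplit : lam j * ((inner ℝ (w j) x : ℝ) - S j)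
        + ∑ i ∈ Finset.univ.erase j, lam i * ((inner ℝ (w i) x : ℝ) - S i)
        = ∑ i, lam i * ((inner ℝ (w i) x : ℝ) - S i) :=
      Finset.add_sum_erase Finset.univ
        (fun i => lam i * ((inner ℝ (w i) x : ℝ) - S i)) (Finset.mem_univ j)
    have herase : ∑ i ∈ Finset.univ.erase j, lam i * ((inner ℝ (w i) x : ℝ) - S i) ≤ 0 := by
      apply Finset.sum_nonpos
      intro i _
      apply mul_nonpos_iff.mpr
      left
      refine ⟨hlamnn i, ?_⟩
      have := le_dirSup_closure hb hxK (w i)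
      rw [hSdef]
      simp only
      linarith
    have h2 : -r * T ≤ lam j * ((inner ℝ (w j) x : ℝ) - S j) := by linarith
    have h3 : -r * ((m : ℝ) * lam j) ≤ -r * T := by nlinarith
    have h4 : -r * (((d : ℝ) + 1) * lam j) ≤ -r * ((m : ℝ) * lam j) := by
      have hmr : (m : ℝ) ≤ (d : ℝ) + 1 := by exact_mod_cast hmd
      have hA : (m : ℝ) * lam j ≤ ((d : ℝ) + 1) * lam j :=
        mul_le_mul_of_nonneg_right hmr hlamj.le
      have hB := mul_le_mul_of_nonneg_left hA hr0.le
      nlinarith [hB]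
    have h5 : -r * (((d : ℝ) + 1) * lam j) ≤ lam j * ((inner ℝ (w j) x : ℝ) - S j) := by
      linarith
    have h6 : lam j * (-(((d : ℝ) + 1) * r)) ≤ lam j * ((inner ℝ (w j) x : ℝ) - S j) := by
      nlinarith
    have h7 := (mul_le_mul_iff_of_pos_left hlamj).mp h6
    linarith
  refine ⟨w j, hwunit j, ?_⟩
  have hinf : S j - ((d : ℝ) + 1) * r ≤ dirInf Ω (w j) := by
    apply le_ciInf
    intro x
    exact hfinal x (subset_closure x.2)
  rw [hSdef] at hinf
  simp only at hinf
  linarith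

end Aux

/-- Width versus inradius for convex sets in `ℝ^d`, `d ≥ 2`. -/
theorem width_inradius_comparison (d : ℕ) (hd : 2 ≤ d) :
    ∃ C > (0 : ℝ), ∀ Ω : Set (EuclideanSpace ℝ (Fin d)),
      IsOpen Ω → Bornology.IsBounded Ω → Convex ℝ Ω → Ω.Nonempty →
      ((∀ (x₀ : EuclideanSpace ℝ (Fin d)) (r : ℝ), 0 < r → Metric.ball x₀ r ⊆ Ω →
          ∀ (ω : EuclideanSpace ℝ (Fin d)) (a w : ℝ), ‖ω‖ = 1 →
            (∀ x ∈ Ω, a ≤ (inner ℝ ω x : ℝ) ∧ (inner ℝ ω x : ℝ) ≤ a + w) →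
          2 * r ≤ w) ∧
        2 * inradius Ω ≤ width Ω ∧
        width Ω ≤ C * inradius Ω) := by
  have hd1 : 1 ≤ d := by omega
  refine ⟨(d : ℝ) + 1, by positivity, ?_⟩
  intro Ω ho hb hc hne
  obtain ⟨x₀', hx₀'⟩ := hne
  haveI : Nonempty Ω := ⟨⟨x₀', hx₀'⟩⟩
  -- slab tool: two points along ±ω inside a ball
  have hslab : ∀ (x₀ : EuclideanSpace ℝ (Fin d)) (r : ℝ), 0 < r → Metric.ball x₀ r ⊆ Ω →
      ∀ (ω : EuclideanSpace ℝ (Fin d)) (a w : ℝ), ‖ω‖ = 1 →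
        (∀ x ∈ Ω, a ≤ (inner ℝ ω x : ℝ) ∧ (inner ℝ ω x : ℝ) ≤ a + w) → 2 * r ≤ w := by
    intro x₀ r hr hball ω a w hω hΩ
    have hself : (inner ℝ ω ω : ℝ) = 1 := by
      rw [real_inner_self_eq_norm_mul_norm, hω]; norm_num
    have hkey : ∀ t : ℝ, 0 ≤ t → t < r → 2 * t ≤ w := by
      intro t ht htr
      have hmem : ∀ s : ℝ, |s| = t → x₀ + s • ω ∈ Ω := by
        intro s hs
        apply hball
        rw [mem_ball, dist_eq_norm, add_sub_cancel_left, norm_smul, hω, mul_one,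
          Real.norm_eq_abs, hs]
        exact htr
      have h1 := hΩ _ (hmem t (abs_of_nonneg ht))
      have h2 := hΩ _ (hmem (-t) (by rw [abs_neg, abs_of_nonneg ht]))
      rw [inner_add_right, real_inner_smul_right, hself] at h1 h2
      obtain ⟨-, h1b⟩ := h1
      obtain ⟨h2a, -⟩ := h2
      -- a ≤ ⟪ω,x₀⟫ - t and ⟪ω,x₀⟫ + t ≤ a + w
      nlinarith
    by_contra hcon
    push_neg at hcon
    have hw0 : 0 ≤ w := by
      have := hkey 0 le_rfl hr
      linarith
    set t : ℝ := (w / 2 + r) / 2 with htdef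
    have ht1 : 0 ≤ t := by rw [htdef]; positivity
    have ht2 : t < r := by rw [htdef]; linarith
    have := hkey t ht1 ht2
    rw [htdef] at this
    linarith
  refine ⟨hslab, ?_, ?_⟩
  · -- 2 * inradius ≤ width
    rw [width_eq]
    haveI : Nonempty (Metric.sphere (0 : EuclideanSpace ℝ (Fin d)) 1) := by
      have hnt : Nontrivial (EuclideanSpace ℝ (Fin d)) := by
        refine ⟨EuclideanSpace.single (⟨0, by omega⟩ : Fin d) (1:ℝ), 0, fun h => ?_⟩
        have := congrArg norm h
        rw [EuclideanSpace.norm_single, norm_zero] at this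
        norm_num at this
      exact (NormedSpace.sphere_nonempty.mpr zero_le_one).to_subtype
    apply le_ciInf
    intro ω
    have hω1 : ‖(ω : EuclideanSpace ℝ (Fin d))‖ = 1 := mem_sphere_zero_iff_norm.mp ω.2
    -- for every x ∈ Ω, 2 * infDist x Ωᶜ ≤ extent
    have hext0 : 0 ≤ dirSup Ω (ω : EuclideanSpace ℝ (Fin d))
        - dirInf Ω (ω : EuclideanSpace ℝ (Fin d)) := by
      have h1 := le_dirSup hb hx₀' (ω : EuclideanSpace ℝ (Fin d))
      have h2 := dirInf_le hb hx₀' (ω : EuclideanSpace ℝ (Fin d))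
      linarith
    have hpt : ∀ x : EuclideanSpace ℝ (Fin d), x ∈ Ω →
        2 * Metric.infDist x Ωᶜ ≤ dirSup Ω (ω : EuclideanSpace ℝ (Fin d))
          - dirInf Ω (ω : EuclideanSpace ℝ (Fin d)) := by
      intro x hx
      set ρ := Metric.infDist x Ωᶜ with hρ
      have hρ0 : 0 ≤ ρ := Metric.infDist_nonneg
      have hkey : ∀ t : ℝ, 0 ≤ t → t < ρ → 2 * t ≤ dirSup Ω (ω : EuclideanSpace ℝ (Fin d))
          - dirInf Ω (ω : EuclideanSpace ℝ (Fin d)) := by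
        intro t ht htρ
        have hmem : ∀ s : ℝ, |s| = t → x + s • (ω : EuclideanSpace ℝ (Fin d)) ∈ Ω := by
          intro s hs
          apply ball_infDist_subset
          rw [mem_ball, dist_eq_norm, add_sub_cancel_left, norm_smul, hω1, mul_one,
            Real.norm_eq_abs, hs]
          exact htρ
        have hself : (inner ℝ (ω : EuclideanSpace ℝ (Fin d)) (ω : EuclideanSpace ℝ (Fin d)) : ℝ)
            = 1 := by
          rw [real_inner_self_eq_norm_mul_norm, hω1]; norm_num
        have h1 := le_dirSup hb (hmem t (abs_of_nonneg ht)) (ω : EuclideanSpace ℝ (Fin d))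
        have h2 := dirInf_le hb (hmem (-t) (by rw [abs_neg, abs_of_nonneg ht]))
          (ω : EuclideanSpace ℝ (Fin d))
        rw [inner_add_right, real_inner_smul_right, hself] at h1 h2
        linarith
      by_contra hcon
      push_neg at hcon
      set D := dirSup Ω (ω : EuclideanSpace ℝ (Fin d))
        - dirInf Ω (ω : EuclideanSpace ℝ (Fin d)) with hD
      set t : ℝ := (D / 2 + ρ) / 2 with htdef
      have hDρ : D / 2 < ρ := by rw [hD]; rw [hD] at hcon; linarith
      have ht1 : 0 ≤ t := by rw [htdef]; positivity
      have ht2 : t < ρ := by rw [htdef]; linarith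
      have := hkey t ht1 ht2
      rw [htdef] at this
      linarith
    -- now take sup over x
    have : inradius Ω ≤ (dirSup Ω (ω : EuclideanSpace ℝ (Fin d))
        - dirInf Ω (ω : EuclideanSpace ℝ (Fin d))) / 2 := by
      rw [inradius]
      apply ciSup_le
      intro x
      by_cases hx : x ∈ Ω
      · rw [ciSup_pos hx]
        have := hpt x hx
        linarith
      · have : IsEmpty (x ∈ Ω) := ⟨hx⟩
        rw [Real.iSup_of_isEmpty]
        linarith
    linarith
  · -- width ≤ (d+1) * inradius
    have hstep : ∀ r : ℝ, inradius Ω < r → width Ω ≤ ((d : ℝ) + 1) * r := by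
      intro r hr
      obtain ⟨ω, hω1, hω2⟩ := steinhagen_aux hd ho hb hc ⟨x₀', hx₀'⟩ hr
      have hmem : ω ∈ Metric.sphere (0 : EuclideanSpace ℝ (Fin d)) 1 :=
        mem_sphere_zero_iff_norm.mpr hω1
      have hbdd : BddBelow (Set.range fun ω' : Metric.sphere (0 : EuclideanSpace ℝ (Fin d)) 1 =>
          dirSup Ω (ω' : EuclideanSpace ℝ (Fin d)) - dirInf Ω (ω' : EuclideanSpace ℝ (Fin d))) := by
        refine ⟨0, ?_⟩
        rintro y ⟨ω', rfl⟩
        have h1 := le_dirSup hb hx₀' (ω' : EuclideanSpace ℝ (Fin d))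
        have h2 := dirInf_le hb hx₀' (ω' : EuclideanSpace ℝ (Fin d))
        simp only
        linarith
      have := ciInf_le hbdd (⟨ω, hmem⟩ : Metric.sphere (0 : EuclideanSpace ℝ (Fin d)) 1)
      rw [← width_eq] at this
      exact le_trans this hω2
    have hC0 : (0:ℝ) < (d : ℝ) + 1 := by positivity
    apply le_of_forall_pos_le_add
    intro ε hε
    have hr : inradius Ω < inradius Ω + ε / ((d : ℝ) + 1) := by
      have h0 : 0 < ε / ((d : ℝ) + 1) := by positivity
      linarith
    have := hstep _ hr
    calc width Ω ≤ ((d : ℝ) + 1) * (inradius Ω + ε / ((d : ℝ) + 1)) := this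
      _ = ((d : ℝ) + 1) * inradius Ω + ε := by field_simp
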